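/- In the recommendation cooperative game where each player i in a finite set N has a finite set B_i of items and the value of a coalition S is v(S) = |⋃_{i∈S} B_i|, the Shapley value of player i equals φ_i = Σ_{j ∈ B_i} 1/|{k ∈ N : j ∈ B_k}|. -/

import Mathlib

/-!
The marginal contribution of `i` to a coalition `S` is the number of items of `B i` that `S`
does not already hold, so after exchanging the sums each item `j ∈ B i` contributes the total
Shapley weight of the coalitions made of players not holding `j`. If `j` has `c` holders, these
coalitions are the subsets of a set of `n - c` players, and the Pascal-type identity
`w (n + 1) s + w (n + 1) (s + 1) = w n s` for the weights removes those players one at a time,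
leaving `w c 0 = 1 / c`.
-/

open Finset Nat

def shapleyWeight (n s : ℕ) : ℚ := (s ! * (n - s - 1)! : ℚ) / n !

lemma shapleyWeight_succ_add_shapleyWeight_succ {n s : ℕ} (hs : s < n) :
    shapleyWeight (n + 1) s + shapleyWeight (n + 1) (s + 1) = shapleyWeight n s := by
  obtain ⟨k, rfl⟩ := Nat.exists_eq_add_of_lt hs
  simp only [shapleyWeight, show s + k + 1 + 1 - s - 1 = k + 1 by omega,
    show s + k + 1 + 1 - (s + 1) - 1 = k by omega, show s + k + 1 - s - 1 = k by omega]
  push_cast [factorial_succ]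
  field_simp
  ring

lemma sum_powerset_shapleyWeight {α : Type*} [DecidableEq α] (A : Finset α) (m : ℕ) :
    ∑ S ∈ A.powerset, shapleyWeight (#A + m + 1) #S = 1 / (m + 1) := by
  induction A using Finset.induction_on with
  | empty => simp [shapleyWeight, factorial_succ]; field_simp
  | insert a A ha ih =>
    rw [sum_powerset_insert ha, card_insert_of_notMem ha, ← ih, ← sum_add_distrib]
    refine sum_congr rfl fun S hS => ?_
    have hSA := mem_powerset.1 hS
    rw [card_insert_of_notMem (notMem_mono hSA ha), add_right_comm #A 1 m]
    exact shapleyWeight_succ_add_shapleyWeight_succ (by have := card_le_card hSA; omega)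

lemma filter_forall_mem_powerset {ι : Type*} (T : Finset ι) (p : ι → Prop) [DecidablePred p] :
    {S ∈ T.powerset | ∀ k ∈ S, p k} = (T.filter p).powerset := by
  ext S
  simp only [mem_filter, mem_powerset, subset_iff]
  exact ⟨fun h k hk => ⟨h.1 hk, h.2 k hk⟩, fun h => ⟨fun k hk => (h hk).1, fun k hk => (h hk).2⟩⟩

lemma sum_mul_card_sdiff {ι α R : Type*} [DecidableEq α] [CommSemiring R] (P : Finset ι)
    (w : ι → R) (s : Finset α) (U : ι → Finset α) :
    ∑ S ∈ P, w S * #(s \ U S) = ∑ j ∈ s, ∑ S ∈ P with j ∉ U S, w S := by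
  simp_rw [sum_filter, sdiff_eq_filter, card_filter]
  push_cast
  simp_rw [mul_sum, mul_ite, mul_one, mul_zero]
  exact sum_comm

theorem shapley_closed_form_general {ι α : Type} [DecidableEq ι] [DecidableEq α]
    (N : Finset ι) (B : ι → Finset α) (i : ι) (hi : i ∈ N) :
    ∑ S ∈ (N.erase i).powerset,
        ((Nat.factorial S.card * Nat.factorial (N.card - S.card - 1) : ℚ) /
            (Nat.factorial N.card : ℚ)) *
          ((((insert i S).biUnion B).card : ℚ) - ((S.biUnion B).card : ℚ))
      = ∑ j ∈ B i, (1 : ℚ) / ((N.filter fun k => j ∈ B k).card : ℚ) := by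
  have marginal (S : Finset ι) :
      (#((insert i S).biUnion B) : ℚ) - #(S.biUnion B) = #(B i \ S.biUnion B) := by
    rw [biUnion_insert, ← card_sdiff_add_card, cast_add, add_sub_cancel_right]
  change ∑ S ∈ (N.erase i).powerset, shapleyWeight #N #S * _ = _
  simp only [marginal, sum_mul_card_sdiff, mem_biUnion, not_exists, not_and]
  simp_rw [filter_forall_mem_powerset]
  refine sum_congr rfl fun j hj => ?_
  have hcard : #((N.erase i).filter fun k => j ∉ B k) + #(N.filter fun k => j ∈ B k) = #N := by
    rw [filter_erase, erase_eq_of_notMem (by simp [hj]), add_comm,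
      card_filter_add_card_filter_not]
  obtain ⟨m, hm⟩ : ∃ m, #(N.filter fun k => j ∈ B k) = m + 1 :=
    Nat.exists_eq_add_one_of_ne_zero (card_pos.2 ⟨i, mem_filter.2 ⟨hi, hj⟩⟩).ne'
  rw [← hcard, hm, ← add_assoc, sum_powerset_shapleyWeight]
  norm_cast

/-- In the recommendation cooperative game with coalition value
`v S = |⋃_{i∈S} B i|`, the Shapley value of player `i` equals
`∑_{j ∈ B i} 1 / |{k ∈ N : j ∈ B k}|`. -/
theorem shapley_closed_form {ι α : Type} [DecidableEq ι] [DecidableEq α]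
    (N : Finset ι) (hN : N.Nonempty) (B : ι → Finset α) (i : ι) (hi : i ∈ N) :
    ∑ S ∈ (N.erase i).powerset,
        ((Nat.factorial S.card * Nat.factorial (N.card - S.card - 1) : ℚ) /
            (Nat.factorial N.card : ℚ)) *
          ((((insert i S).biUnion B).card : ℚ) - ((S.biUnion B).card : ℚ))
      = ∑ j ∈ B i, (1 : ℚ) / ((N.filter fun k => j ∈ B k).card : ℚ) :=
  shapley_closed_form_general N B i hi
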